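/- arXiv:1805.11922 — 4 statements merged into one kernel-verified Lean document; each statement's English description precedes it below -/
import Mathlib

section
/- Let R be a commutative ring. The Stirling transform S is a ring automorphism of (H_R, +, ⋆), i.e., S(a + c) = S(a) + S(c) and S(a ⋆ c) = S(a) ⋆ S(c) for all a, c ∈ H_R, where ⋆ is the binomial convolution product. -/
/-- The binomial convolution (Hurwitz) product of sequences. -/
def hmul {R : Type*} [CommRing R] (a b : ℕ → R) : ℕ → R :=
  fun n => ∑ h ∈ Finset.range (n + 1), (n.choose h : R) * a h * b (n - h)

/-- The identity sequence `(1,0,0,...)`. -/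
def hone {R : Type*} [CommRing R] : ℕ → R := fun n => if n = 0 then 1 else 0

/-- Stirling numbers of the second kind. -/
def S2 : ℕ → ℕ → ℕ
  | 0, 0 => 1
  | 0, _ + 1 => 0
  | _ + 1, 0 => 0
  | n + 1, k + 1 => (k + 1) * S2 n (k + 1) + S2 n k

/-- The Stirling transform of a sequence. -/
def stirlingT {R : Type*} [CommRing R] (a : ℕ → R) : ℕ → R :=
  fun n => ∑ h ∈ Finset.range (n + 1), (S2 n h : R) * a h

open Finset

lemma S2_zero (n : ℕ) : S2 n 0 = if n = 0 then 1 else 0 := by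
  cases n <;> simp [S2]

lemma S2_eq_zero {n k : ℕ} (h : n < k) : S2 n k = 0 := by
  induction n generalizing k with
  | zero => cases k with | zero => omega | succ k => simp [S2]
  | succ n ih =>
    cases k with
    | zero => omega
    | succ k => rw [S2, ih (show n < k + 1 by omega), ih (show n < k by omega)]; ring

lemma S2_self (n : ℕ) : S2 n n = 1 := by
  induction n with
  | zero => rfl
  | succ n ih => simp [S2, ih, S2_eq_zero (Nat.lt_succ_self n)]

lemma key_i0 (n j : ℕ) :
    ∑ k ∈ range (n + 1), n.choose k * S2 k 0 * S2 (n - k) j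
      = (0 + j).choose 0 * S2 n (0 + j) := by
  rw [Finset.sum_eq_single 0]
  · simp [S2]
  · intro k hk hk0
    rw [S2_zero, if_neg hk0]; ring
  · intro h; exact absurd (mem_range.2 (by omega)) h

lemma key_j0 (n i : ℕ) :
    ∑ k ∈ range (n + 1), n.choose k * S2 k i * S2 (n - k) 0
      = (i + 0).choose i * S2 n (i + 0) := by
  rw [Finset.sum_eq_single n]
  · simp [S2_self, Nat.choose_self, S2]
  · intro k hk hkn
    have : n - k ≠ 0 := by simp at hk; omega
    rw [S2_zero, if_neg this]; ring
  · intro h; exact absurd (mem_range.2 (by omega)) h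

/-- The key Stirling convolution identity. -/
lemma key (n : ℕ) : ∀ i j : ℕ,
    ∑ k ∈ range (n + 1), n.choose k * S2 k i * S2 (n - k) j
      = (i + j).choose i * S2 n (i + j) := by
  induction n with
  | zero =>
    intro i j
    cases i with
    | zero => exact key_i0 0 j
    | succ i => cases j <;> simp [S2, S2_eq_zero]
  | succ n ih =>
    intro i j
    cases i with
    | zero => exact key_i0 _ j
    | succ i =>
      cases j with
      | zero => exact key_j0 _ _
      | succ j =>
        rw [Finset.sum_range_succ']
        have hsplit : ∑ k ∈ range (n + 1),
            (n + 1).choose (k + 1) * S2 (k + 1) (i + 1) * S2 (n + 1 - (k + 1)) (j + 1)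
            = (∑ k ∈ range (n + 1), n.choose k * S2 (k + 1) (i + 1) * S2 (n - k) (j + 1))
              + ∑ k ∈ range (n + 1), n.choose (k + 1) * S2 (k + 1) (i + 1) * S2 (n - k) (j + 1) := by
          rw [← Finset.sum_add_distrib]
          refine Finset.sum_congr rfl fun k hk => ?_
          rw [Nat.choose_succ_succ]
          have : n + 1 - (k + 1) = n - k := by omega
          rw [this]; ring
        rw [hsplit]
        have hA : ∑ k ∈ range (n + 1), n.choose k * S2 (k + 1) (i + 1) * S2 (n - k) (j + 1)
            = (i + 1) * ((i + 1 + (j + 1)).choose (i + 1) * S2 n (i + 1 + (j + 1)))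
              + (i + (j + 1)).choose i * S2 n (i + (j + 1)) := by
          rw [← ih (i+1) (j+1), ← ih i (j+1), Finset.mul_sum, ← Finset.sum_add_distrib]
          refine Finset.sum_congr rfl fun k hk => ?_
          show n.choose k * S2 (k + 1) (i + 1) * S2 (n - k) (j + 1) = _
          rw [show S2 (k + 1) (i + 1) = (i + 1) * S2 k (i + 1) + S2 k i from rfl]
          ring
        have hshift : ∑ k ∈ range (n + 1), n.choose (k + 1) * S2 (k + 1) (i + 1) * S2 (n - k) (j + 1)
            = ∑ m ∈ range (n + 1), n.choose m * S2 m (i + 1) * S2 (n + 1 - m) (j + 1) := by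
          have h2 : ∑ m ∈ range (n + 2), n.choose m * S2 m (i + 1) * S2 (n + 1 - m) (j + 1)
              = (∑ k ∈ range (n + 1), n.choose (k + 1) * S2 (k + 1) (i + 1) * S2 (n + 1 - (k + 1)) (j + 1))
                + n.choose 0 * S2 0 (i + 1) * S2 (n + 1 - 0) (j + 1) :=
            Finset.sum_range_succ' _ _
          have h3 : ∑ m ∈ range (n + 2), n.choose m * S2 m (i + 1) * S2 (n + 1 - m) (j + 1)
              = (∑ m ∈ range (n + 1), n.choose m * S2 m (i + 1) * S2 (n + 1 - m) (j + 1))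
                + n.choose (n + 1) * S2 (n + 1) (i + 1) * S2 (n + 1 - (n + 1)) (j + 1) :=
            Finset.sum_range_succ _ _
          have h4 : ∀ k ∈ range (n + 1), n.choose (k + 1) * S2 (k + 1) (i + 1) * S2 (n + 1 - (k + 1)) (j + 1)
              = n.choose (k + 1) * S2 (k + 1) (i + 1) * S2 (n - k) (j + 1) := by
            intro k hk
            congr 2
            omega
          rw [Finset.sum_congr rfl h4] at h2
          have hg0 : n.choose 0 * S2 0 (i + 1) * S2 (n + 1 - 0) (j + 1) = 0 := by simp [S2]
          have hgN : n.choose (n + 1) * S2 (n + 1) (i + 1) * S2 (n + 1 - (n + 1)) (j + 1) = 0 := by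
            simp [Nat.choose_succ_self]
          rw [hg0] at h2
          rw [hgN] at h3
          omega
        have hB : ∑ m ∈ range (n + 1), n.choose m * S2 m (i + 1) * S2 (n + 1 - m) (j + 1)
            = (j + 1) * ((i + 1 + (j + 1)).choose (i + 1) * S2 n (i + 1 + (j + 1)))
              + (i + 1 + j).choose (i + 1) * S2 n (i + 1 + j) := by
          rw [← ih (i+1) (j+1), ← ih (i+1) j, Finset.mul_sum, ← Finset.sum_add_distrib]
          refine Finset.sum_congr rfl fun m hm => ?_
          have hm' : m ≤ n := by simp at hm; omega
          have h5 : n + 1 - m = (n - m) + 1 := by omega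
          rw [h5, show S2 (n - m + 1) (j + 1) = (j + 1) * S2 (n - m) (j + 1) + S2 (n - m) j from rfl]
          ring
        rw [hshift, hA, hB]
        have hS : S2 0 (i + 1) = 0 := by simp [S2]
        rw [hS]
        simp only [show i + (j + 1) = i + j + 1 from by omega,
          show i + 1 + j = i + j + 1 from by omega,
          show i + 1 + (j + 1) = i + j + 2 from by omega]
        have hrec : S2 (n + 1) (i + j + 2) = (i + j + 2) * S2 n (i + j + 2) + S2 n (i + j + 1) := rfl
        have hch : (i + j + 2).choose (i + 1) = (i + j + 1).choose i + (i + j + 1).choose (i + 1) :=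
          Nat.choose_succ_succ (i + j + 1) i
        rw [hrec, hch]
        ring

/-- Triangle reindexing. -/
lemma tri {M : Type*} [AddCommMonoid M] (n : ℕ) (g : ℕ → ℕ → M) :
    ∑ h ∈ range (n + 1), ∑ i ∈ range (h + 1), g i (h - i)
      = ∑ i ∈ range (n + 1), ∑ j ∈ range (n + 1 - i), g i j := by
  induction n with
  | zero => simp
  | succ n ih =>
    rw [Finset.sum_range_succ, ih, Finset.sum_range_succ (fun i => g i (n + 1 - i)),
      Finset.sum_range_succ (fun i => ∑ j ∈ range (n + 1 + 1 - i), g i j)]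
    have h1 : n + 1 + 1 - (n + 1) = 1 := by omega
    have h2 : n + 1 - (n + 1) = 0 := by omega
    rw [h1, h2, Finset.sum_range_one]
    have h3 : ∀ i ∈ range (n + 1), ∑ j ∈ range (n + 1 + 1 - i), g i j
        = ∑ j ∈ range (n + 1 - i), g i j + g i (n + 1 - i) := by
      intro i hi
      have : n + 1 + 1 - i = (n + 1 - i) + 1 := by simp at hi; omega
      rw [this, Finset.sum_range_succ]
    rw [Finset.sum_congr rfl h3, Finset.sum_add_distrib]
    abel

/-- A recursive inverse of the Stirling transform. -/
def preT {R : Type*} [CommRing R] (b : ℕ → R) : ℕ → R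
  | n => b n - ∑ h ∈ (Finset.range n).attach, (S2 n h.1 : R) * preT b h.1
decreasing_by exact Finset.mem_range.mp h.2

lemma preT_eq {R : Type*} [CommRing R] (b : ℕ → R) (n : ℕ) :
    preT b n = b n - ∑ h ∈ Finset.range n, (S2 n h : R) * preT b h := by
  rw [preT, ← Finset.sum_attach (Finset.range n) (fun h => (S2 n h : R) * preT b h)]

lemma stirlingT_preT {R : Type*} [CommRing R] (b : ℕ → R) : stirlingT (preT b) = b := by
  funext n
  show ∑ h ∈ range (n + 1), (S2 n h : R) * preT b h = b n
  rw [Finset.sum_range_succ, S2_self, preT_eq]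
  push_cast
  ring

/-- The Stirling transform is a ring automorphism of `(H_R, +, ⋆)`. -/
theorem stirling_transform_automorphism {R : Type*} [CommRing R] :
    (∀ a c : ℕ → R, stirlingT (a + c) = stirlingT a + stirlingT c) ∧
    (∀ a c : ℕ → R, stirlingT (hmul a c) = hmul (stirlingT a) (stirlingT c)) ∧
    stirlingT (hone : ℕ → R) = hone ∧
    Function.Bijective (stirlingT (R := R)) := by
  refine ⟨?_, ?_, ?_, ?_, ?_⟩
  · -- additivity
    intro a c
    funext n
    show ∑ h ∈ range (n + 1), (S2 n h : R) * (a h + c h) = _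
    simp [stirlingT, mul_add, Finset.sum_add_distrib]
  · -- multiplicativity
    intro a c
    funext n
    show ∑ h ∈ range (n + 1), (S2 n h : R) * (∑ i ∈ range (h + 1), (h.choose i : R) * a i * c (h - i))
      = ∑ k ∈ range (n + 1), (n.choose k : R) * stirlingT a k * stirlingT c (n - k)
    have keyR : ∀ i j : ℕ, ((i + j).choose i : R) * (S2 n (i + j) : R)
        = ∑ k ∈ range (n + 1), (n.choose k : R) * (S2 k i : R) * (S2 (n - k) j : R) := by
      intro i j
      have h := key n i j
      have := congrArg (Nat.cast : ℕ → R) h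
      push_cast at this
      exact this.symm
    -- LHS to triple sum
    have hL : ∑ h ∈ range (n + 1), (S2 n h : R) * (∑ i ∈ range (h + 1), (h.choose i : R) * a i * c (h - i))
        = ∑ i ∈ range (n + 1), ∑ j ∈ range (n + 1),
            (∑ k ∈ range (n + 1), (n.choose k : R) * (S2 k i : R) * (S2 (n - k) j : R)) * a i * c j := by
      have step1 : ∑ h ∈ range (n + 1), (S2 n h : R) * (∑ i ∈ range (h + 1), (h.choose i : R) * a i * c (h - i))
          = ∑ h ∈ range (n + 1), ∑ i ∈ range (h + 1),
              (((i + (h - i)).choose i : R) * (S2 n (i + (h - i)) : R)) * a i * c (h - i) := by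
        refine Finset.sum_congr rfl fun h hh => ?_
        rw [Finset.mul_sum]
        refine Finset.sum_congr rfl fun i hi => ?_
        have : i + (h - i) = h := by simp at hi; omega
        rw [this]; ring
      rw [step1, tri n (fun i j => (((i + j).choose i : R) * (S2 n (i + j) : R)) * a i * c j)]
      refine Finset.sum_congr rfl fun i hi => ?_
      have hext : ∑ j ∈ range (n + 1 - i), (((i + j).choose i : R) * (S2 n (i + j) : R)) * a i * c j
          = ∑ j ∈ range (n + 1), (((i + j).choose i : R) * (S2 n (i + j) : R)) * a i * c j := by
        refine Finset.sum_subset (Finset.range_subset_range.2 (by omega)) ?_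
        intro j hj hj'
        have : n < i + j := by simp at hj hj' ⊢; omega
        rw [S2_eq_zero this]
        push_cast; ring
      rw [hext]
      refine Finset.sum_congr rfl fun j hj => ?_
      rw [keyR]
    rw [hL]
    -- RHS to triple sum
    have hR : ∑ k ∈ range (n + 1), (n.choose k : R) * stirlingT a k * stirlingT c (n - k)
        = ∑ k ∈ range (n + 1), ∑ i ∈ range (n + 1), ∑ j ∈ range (n + 1),
            (n.choose k : R) * (S2 k i : R) * (S2 (n - k) j : R) * a i * c j := by
      refine Finset.sum_congr rfl fun k hk => ?_
      have hk' : k ≤ n := by simp at hk; omega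
      have ha : stirlingT a k = ∑ i ∈ range (n + 1), (S2 k i : R) * a i := by
        refine Finset.sum_subset (Finset.range_subset_range.2 (by omega)) ?_
        intro i hi hi'
        have : k < i := by simp at hi hi' ⊢; omega
        rw [S2_eq_zero this]; push_cast; ring
      have hc : stirlingT c (n - k) = ∑ j ∈ range (n + 1), (S2 (n - k) j : R) * c j := by
        refine Finset.sum_subset (Finset.range_subset_range.2 (by omega)) ?_
        intro j hj hj'
        have : n - k < j := by simp at hj hj' ⊢; omega
        rw [S2_eq_zero this]; push_cast; ring
      rw [ha, hc]
      simp only [Finset.mul_sum, Finset.sum_mul]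
      rw [Finset.sum_comm]
      refine Finset.sum_congr rfl fun i hi => ?_
      refine Finset.sum_congr rfl fun j hj => ?_
      ring
    rw [hR]
    -- commute the sums
    conv_rhs => rw [Finset.sum_comm]
    refine Finset.sum_congr rfl fun i hi => ?_
    conv_rhs => rw [Finset.sum_comm]
    refine Finset.sum_congr rfl fun j hj => ?_
    rw [Finset.sum_mul, Finset.sum_mul]
  · -- unit
    funext n
    show ∑ h ∈ range (n + 1), (S2 n h : R) * (if h = 0 then 1 else 0) = (if n = 0 then 1 else 0 : R)
    rw [Finset.sum_eq_single 0]
    · rw [S2_zero]; split <;> simp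
    · intro h hh h0; rw [if_neg h0]; ring
    · intro h; exact absurd (mem_range.2 (by omega)) h
  · -- injective
    intro a a' hae
    funext n
    induction n using Nat.strong_induction_on with
    | _ n ih =>
      have h1 : stirlingT a n = stirlingT a' n := by rw [hae]
      have h2 : ∑ h ∈ range (n + 1), (S2 n h : R) * a h
          = ∑ h ∈ range (n + 1), (S2 n h : R) * a' h := h1
      rw [Finset.sum_range_succ, Finset.sum_range_succ, S2_self] at h2
      have h3 : ∑ h ∈ range n, (S2 n h : R) * a h = ∑ h ∈ range n, (S2 n h : R) * a' h :=
        Finset.sum_congr rfl fun h hh => by rw [ih h (mem_range.mp hh)]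
      rw [h3] at h2
      simp only [Nat.cast_one, one_mul] at h2
      exact add_left_cancel h2
  · -- surjective
    intro b
    exact ⟨preT b, stirlingT_preT b⟩
end

section
/- Let a ∈ H_R with a[0] = 1 and let p^{(a)}(x) = (p_n^{(a)}(x))_{n≥0} be the associated sequence of polynomials defined by p_n^{(a)}(x) = n! ∑_{k=0}^{n} C(x,k) B_{n,k}(a_1,...,a_{n-k+1}). Then p^{(a)}(x+y) = p^{(a)}(x) ⋆ p^{(a)}(y), i.e., p_n^{(a)}(x+y) = ∑_{h=0}^{n} C(n,h) p_h^{(a)}(x) p_{n-h}^{(a)}(y) for all n. -/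
/-- The partial ordinary Bell polynomials `B_{n,k}(x_1, x_2, ...)`, defined by
`(∑_{m ≥ 1} x_m z^m)^k = ∑_{n ≥ k} B_{n,k} z^n`. -/
noncomputable def obell {R : Type*} [CommRing R] (x : ℕ → R) (n k : ℕ) : R :=
  PowerSeries.coeff (R := R) n ((PowerSeries.mk fun m => if m = 0 then 0 else x m) ^ k)

/-- The exponential generating function of a sequence, over a `ℚ`-algebra. -/
noncomputable def egf {R : Type*} [CommRing R] [Algebra ℚ R] (a : ℕ → R) : PowerSeries R :=
  PowerSeries.mk fun n => algebraMap ℚ R (1 / n.factorial) * a n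

/-- The binomial coefficient polynomial `C(x,k) = x(x-1)⋯(x-k+1)/k!`. -/
noncomputable def binomPoly {R : Type*} [CommRing R] [Algebra ℚ R] (k : ℕ) : Polynomial R :=
  Polynomial.C (algebraMap ℚ R (1 / k.factorial)) *
    ∏ i ∈ Finset.range k, (Polynomial.X - (i : Polynomial R))

/-- The binomial-type polynomial sequence `p_n^{(a)}(x)`, the coefficients (times `n!`)
of `(A(t))^x = ∑_k C(x,k) (A(t)-1)^k`. -/
noncomputable def paseq {R : Type*} [CommRing R] [Algebra ℚ R] (a : ℕ → R) (n : ℕ) :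
    Polynomial R :=
  (n.factorial : Polynomial R) *
    PowerSeries.coeff (R := Polynomial R) n
      (∑ k ∈ Finset.range (n + 1),
        PowerSeries.C (R := Polynomial R) (binomPoly k) *
          (PowerSeries.map (Polynomial.C) (egf a) - 1) ^ k)

/-!
Since `a 0 = 1`, the series `T = A(t) - 1` has no constant term, so it can be substituted into
the binomial series `(1 + T)^x = ∑_k C(x,k) T^k`, and the terms with `k > n` do not reach the
coefficient of `t^n`; hence `p_n^{(a)}(x) = n! [t^n] (1 + T)^x`. Vandermonde's identity gives
`(1 + T)^(x+y) = (1 + T)^x (1 + T)^y`, substitution is multiplicative, and `n!` times the `n`-th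
coefficient of a product is the binomial convolution of the normalized coefficients.
-/

open Finset

-- Gives every `ℚ`-algebra Mathlib's `BinomialRing` instance, hence `Ring.choose` and
-- `PowerSeries.binomialSeries`.
abbrev Algebra.nnratModule (S : Type*) [CommRing S] [Algebra ℚ S] : Module ℚ≥0 S :=
  Module.compHom S NNRat.coeHom

attribute [local instance] Algebra.nnratModule

section QAlgebra

variable {S : Type*} [CommRing S] [Algebra ℚ S]

theorem Ring.choose_eq_inv_factorial_mul_prod (u : S) (k : ℕ) :
    Ring.choose u k = algebraMap ℚ S (1 / k.factorial) * ∏ i ∈ range k, (u - i) := by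
  have hk : (k.factorial : ℚ) ≠ 0 := by exact_mod_cast k.factorial_ne_zero
  have h := Ring.descPochhammer_eq_factorial_smul_choose u k
  rw [← Polynomial.aeval_eq_smeval, Polynomial.aeval_def, Polynomial.eval₂_eq_eval_map,
    descPochhammer_map, descPochhammer_eval_eq_prod_range, nsmul_eq_mul] at h
  rw [h, ← mul_assoc, ← map_natCast (algebraMap ℚ S), ← map_mul, one_div, inv_mul_cancel₀ hk,
    map_one, one_mul]

theorem aeval_binomPoly {R : Type*} [CommRing R] [Algebra ℚ R] [Algebra R S] (k : ℕ) (u : S) :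
    Polynomial.aeval u (binomPoly k : Polynomial R) = Ring.choose u k := by
  rw [binomPoly, Ring.choose_eq_inv_factorial_mul_prod, map_mul, Polynomial.aeval_C, map_prod,
    RingHom.map_rat_algebraMap]
  simp

end QAlgebra

namespace PowerSeries

theorem coeff_pow_eq_zero_of_lt {S : Type*} [CommSemiring S] {E : PowerSeries S}
    (hE : constantCoeff E = 0) {n k : ℕ} (h : n < k) : coeff n (E ^ k) = 0 :=
  coeff_of_lt_order n ((Nat.cast_lt.mpr h).trans_le (le_order_pow_of_constantCoeff_eq_zero k hE))

theorem factorial_mul_coeff_mul {S : Type*} [CommSemiring S] (f g : PowerSeries S) (n : ℕ) :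
    (n.factorial : S) * coeff n (f * g) = ∑ h ∈ range (n + 1),
      (n.choose h : S) * (h.factorial * coeff h f) * ((n - h).factorial * coeff (n - h) g) := by
  rw [coeff_mul, Nat.sum_antidiagonal_eq_sum_range_succ_mk, mul_sum]
  refine sum_congr rfl fun h hh => ?_
  rw [← Nat.choose_mul_factorial_mul_factorial (Nat.lt_succ_iff.mp (mem_range.mp hh))]
  push_cast
  ring

theorem coeff_subst_binomialSeries {S : Type*} [CommRing S] [BinomialRing S] {E : PowerSeries S}
    (hE : constantCoeff E = 0) (u : S) (n : ℕ) :
    coeff n ((binomialSeries S u).subst E) =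
      ∑ k ∈ range (n + 1), Ring.choose u k * coeff n (E ^ k) := by
  rw [coeff_subst' (HasSubst.of_constantCoeff_zero' hE),
    finsum_eq_sum_of_support_subset _ (s := range (n + 1))]
  · simp
  · intro k hk
    by_contra hkn
    simp only [coe_range, Set.mem_Iio, not_lt] at hkn
    exact hk (by simp [coeff_pow_eq_zero_of_lt hE (Nat.lt_of_succ_le hkn)])

theorem constantCoeff_map_egf_sub_one {R S : Type*} [CommRing R] [Algebra ℚ R] [CommRing S]
    [Algebra R S] {a : ℕ → R} (ha : a 0 = 1) :
    constantCoeff (map (algebraMap R S) (egf a) - 1) = 0 := by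
  rw [map_sub, map_one, ← coeff_zero_eq_constantCoeff_apply, coeff_map, egf, coeff_mk]
  simp [ha]

end PowerSeries

open PowerSeries in
theorem aeval_paseq {R S : Type*} [CommRing R] [Algebra ℚ R] [CommRing S] [Algebra ℚ S]
    [Algebra R S] {a : ℕ → R} (ha : a 0 = 1) (n : ℕ) (u : S) :
    Polynomial.aeval u (paseq a n) = n.factorial *
      coeff n ((binomialSeries S u).subst (map (algebraMap R S) (egf a) - 1)) := by
  rw [coeff_subst_binomialSeries (constantCoeff_map_egf_sub_one ha), paseq, map_mul,
    map_natCast, map_sum, map_sum]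
  refine congrArg _ (sum_congr rfl fun k _ => ?_)
  have hC : ((Polynomial.aeval u : Polynomial R →ₐ[R] S) : Polynomial R →+* S).comp
      Polynomial.C = algebraMap R S :=
    RingHom.ext fun r => Polynomial.aeval_C u r
  rw [coeff_C_mul, map_mul, aeval_binomPoly, ← RingHom.coe_coe (Polynomial.aeval u), ← coeff_map,
    map_pow, map_sub, map_one, ← RingHom.comp_apply, ← map_comp, hC]

open MvPolynomial in
/-- The binomial-type property: `p_n^{(a)}(x+y) = ∑_h C(n,h) p_h^{(a)}(x) p_{n-h}^{(a)}(y)`,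
as an identity of polynomials in two variables. -/
theorem paseq_binomial_type {R : Type*} [CommRing R] [Algebra ℚ R] (a : ℕ → R)
    (ha : a 0 = 1) (n : ℕ) :
    Polynomial.aeval (X 0 + X 1 : MvPolynomial (Fin 2) R) (paseq a n) =
      ∑ h ∈ Finset.range (n + 1), (n.choose h : MvPolynomial (Fin 2) R) *
        Polynomial.aeval (X 0 : MvPolynomial (Fin 2) R) (paseq a h) *
        Polynomial.aeval (X 1 : MvPolynomial (Fin 2) R) (paseq a (n - h)) := by
  have hT := PowerSeries.HasSubst.of_constantCoeff_zero'
    (PowerSeries.constantCoeff_map_egf_sub_one (S := MvPolynomial (Fin 2) R) ha)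
  simp only [aeval_paseq ha]
  rw [PowerSeries.binomialSeries_add, PowerSeries.subst_mul hT,
    PowerSeries.factorial_mul_coeff_mul]
end

section
/- Let p be a prime. Every element a of U_{ℤ_p}^{(n)} = {a ∈ (ℤ/pℤ)^n : a[0] = 1} different from the identity (1,0,...,0) has order p in the group (U_{ℤ_p}^{(n)}, ⋆), where ⋆ is the (truncated) binomial convolution product. Consequently (U_{ℤ_p}^{(n)}, ⋆) is an elementary abelian p-group of order p^{n-1}, isomorphic to ((ℤ/pℤ)^{n-1}, +). -/
/-!
The binomial convolution is the product of Hurwitz series (formally, of exponential generating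
functions `∑ xₘ tᵐ / m!`), and the shift `x ↦ (x (m + 1))ₘ` is a derivation for it. A Hurwitz
series is determined by its constant term and its shift, so commutativity and associativity follow
from the Leibniz rule by induction on the index, and `shift (x ^ p) = p • x ^ (p - 1) * shift x = 0`
in characteristic `p` makes `x ^ p` the constant `x 0 ^ p = 1`. Truncation to the first `n` terms
respects the product, so `U` is an abelian group of exponent `p`, i.e. a `ZMod p`-vector space;
having `p ^ (n - 1)` elements, it has dimension `n - 1`, and each of its elements other than the
identity has order `p`.
-/

/-- Extend a finite sequence by zeros. -/
def ext {R : Type*} [CommRing R] {n : ℕ} (a : Fin n → R) : ℕ → R :=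
  fun i => if h : i < n then a ⟨i, h⟩ else 0

/-- The truncated binomial convolution product on sequences of length `n`. -/
def tmul {R : Type*} [CommRing R] {n : ℕ} (a b : Fin n → R) : Fin n → R :=
  fun m => ∑ h ∈ Finset.range (m.1 + 1), (m.1.choose h : R) * ext a h * ext b (m.1 - h)

/-- The identity `(1,0,...,0)` for the truncated binomial convolution. -/
def tone {R : Type*} [CommRing R] {n : ℕ} : Fin n → R := fun m => if m.1 = 0 then 1 else 0

/-- `k`-th power with respect to the truncated binomial convolution. -/
def tpow {R : Type*} [CommRing R] {n : ℕ} (a : Fin n → R) (k : ℕ) : Fin n → R :=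
  (fun b => tmul a b)^[k] tone

namespace Hurwitz

open Finset

def shift {α : Type*} (x : ℕ → α) : ℕ → α := fun m => x (m + 1)

lemma eq_of_shift_eq {α : Type*} {x y : ℕ → α} (h₀ : x 0 = y 0) (h : shift x = shift y) :
    x = y := by
  funext m
  cases m with
  | zero => exact h₀
  | succ m => exact congrFun h m

variable {R : Type*} [CommRing R]

def mul (x y : ℕ → R) : ℕ → R :=
  fun m => ∑ ij ∈ antidiagonal m, (m.choose ij.1 : R) * (x ij.1 * y ij.2)

def one : ℕ → R := fun m => if m = 0 then 1 else 0

def pow (x : ℕ → R) (k : ℕ) : ℕ → R := (mul x)^[k] one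

lemma mul_apply_zero (x y : ℕ → R) : mul x y 0 = x 0 * y 0 := by
  simp [mul]

lemma add_mul (x y z : ℕ → R) : mul (x + y) z = mul x z + mul y z := by
  funext m
  simp only [mul, Pi.add_apply, _root_.mul_add, _root_.add_mul, sum_add_distrib]

lemma mul_add (x y z : ℕ → R) : mul x (y + z) = mul x y + mul x z := by
  funext m
  simp only [mul, Pi.add_apply, _root_.mul_add, sum_add_distrib]

lemma mul_zero (x : ℕ → R) : mul x 0 = 0 := by
  funext m
  simp [mul]

lemma mul_nsmul (x y : ℕ → R) (k : ℕ) : mul x (k • y) = k • mul x y := by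
  funext m
  simp only [mul, Pi.smul_apply, nsmul_eq_mul, mul_sum]
  exact sum_congr rfl fun _ _ => by ring

lemma shift_mul (x y : ℕ → R) : shift (mul x y) = mul (shift x) y + mul x (shift y) := by
  funext m
  change ∑ ij ∈ antidiagonal (m + 1), ((m + 1).choose ij.1 : R) * (x ij.1 * y ij.2) = _
  rw [sum_antidiagonal_choose_succ_mul (fun i j => x i * y j), add_comm]
  congr 1
  refine sum_congr rfl fun ij hij => ?_
  rw [Nat.choose_symm_of_eq_add (mem_antidiagonal.mp hij).symm]
  rfl

lemma one_mul (x : ℕ → R) : mul one x = x := by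
  funext m
  rw [mul, sum_eq_single (0, m)]
  · simp [one]
  · rintro ⟨i, j⟩ _ hij
    have : i ≠ 0 := by rintro rfl; simp_all
    simp [one, this]
  · simp

lemma mul_comm (x y : ℕ → R) : mul x y = mul y x := by
  suffices ∀ m, ∀ x y : ℕ → R, mul x y m = mul y x m from funext fun m => this m x y
  intro m
  induction m with
  | zero => intro x y; simp only [mul_apply_zero, _root_.mul_comm]
  | succ m ih =>
    intro x y
    change shift (mul x y) m = shift (mul y x) m
    simp only [shift_mul, Pi.add_apply, ih (shift x), ih x]
    exact add_comm _ _

lemma mul_assoc (x y z : ℕ → R) : mul (mul x y) z = mul x (mul y z) := by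
  suffices ∀ m, ∀ x y z : ℕ → R, mul (mul x y) z m = mul x (mul y z) m from
    funext fun m => this m x y z
  intro m
  induction m with
  | zero => intro x y z; simp only [mul_apply_zero, _root_.mul_assoc]
  | succ m ih =>
    intro x y z
    change shift (mul (mul x y) z) m = shift (mul x (mul y z)) m
    simp only [shift_mul, add_mul, mul_add, Pi.add_apply, ih]
    abel

lemma pow_succ (x : ℕ → R) (k : ℕ) : pow x (k + 1) = mul x (pow x k) :=
  Function.iterate_succ_apply' _ _ _

lemma pow_apply_zero (x : ℕ → R) (k : ℕ) : pow x k 0 = x 0 ^ k := by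
  induction k with
  | zero => simp [pow, one]
  | succ k ih => rw [pow_succ, mul_apply_zero, ih, _root_.pow_succ']

lemma shift_pow_succ (x : ℕ → R) (k : ℕ) :
    shift (pow x (k + 1)) = (k + 1) • mul (pow x k) (shift x) := by
  induction k with
  | zero =>
    have : shift (one : ℕ → R) = 0 := funext fun m => by simp [shift, one]
    rw [pow_succ, shift_mul]
    change mul (shift x) one + mul x (shift one) = _
    rw [this, mul_zero, add_zero, zero_add, one_smul, mul_comm]
    rfl
  | succ k ih =>
    rw [pow_succ, shift_mul, ih, mul_nsmul, ← mul_assoc, ← pow_succ, mul_comm (shift x),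
      succ_nsmul' _ (k + 1)]

lemma pow_char_eq_one (p : ℕ) [CharP R p] [NeZero p] {x : ℕ → R} (hx : x 0 = 1) :
    pow x p = one := by
  obtain ⟨q, rfl⟩ := Nat.exists_eq_succ_of_ne_zero (NeZero.ne p)
  refine eq_of_shift_eq (by simp [pow_apply_zero, hx, one]) ?_
  rw [shift_pow_succ]
  funext m
  simp [shift, one, nsmul_eq_mul, CharP.cast_eq_zero]

def trunc (n : ℕ) (x : ℕ → R) : Fin n → R := fun m => x m

end Hurwitz

section Truncated

open Hurwitz (mul one trunc)

variable {R : Type*} [CommRing R] {n : ℕ}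

lemma tmul_eq_trunc_mul (a b : Fin n → R) : tmul a b = trunc n (mul (ext a) (ext b)) := by
  funext m
  rw [tmul, trunc, mul, Finset.Nat.sum_antidiagonal_eq_sum_range_succ
    (fun i j => (m.1.choose i : R) * (ext a i * ext b j))]
  exact Finset.sum_congr rfl fun _ _ => mul_assoc _ _ _

lemma trunc_ext (a : Fin n → R) : trunc n (ext a) = a := by
  funext m
  simp [trunc, ext]

lemma ext_trunc_apply (x : ℕ → R) {i : ℕ} (hi : i < n) : ext (trunc n x) i = x i := by
  simp [ext, trunc, hi]

lemma ext_tone (hn : 0 < n) : ext (tone : Fin n → R) = one := by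
  funext i
  by_cases hi : i < n
  · simp [ext, tone, one, hi]
  · simp [ext, one, hi, show i ≠ 0 by omega]

lemma trunc_mul_congr {x x' y y' : ℕ → R} (hx : ∀ i < n, x i = x' i) (hy : ∀ i < n, y i = y' i) :
    trunc n (mul x y) = trunc n (mul x' y') := by
  funext m
  simp only [trunc, mul]
  refine Finset.sum_congr rfl fun ij hij => ?_
  have hsum := Finset.HasAntidiagonal.mem_antidiagonal.mp hij
  rw [hx ij.1 (by omega), hy ij.2 (by omega)]

lemma tmul_comm (a b : Fin n → R) : tmul a b = tmul b a := by
  rw [tmul_eq_trunc_mul, tmul_eq_trunc_mul, Hurwitz.mul_comm]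

lemma tmul_assoc (a b c : Fin n → R) : tmul (tmul a b) c = tmul a (tmul b c) := by
  simp only [tmul_eq_trunc_mul]
  rw [trunc_mul_congr (fun i hi => ext_trunc_apply _ hi) (fun _ _ => rfl), Hurwitz.mul_assoc,
    trunc_mul_congr (fun _ _ => rfl) (fun i hi => (ext_trunc_apply _ hi).symm)]

lemma tone_tmul (hn : 0 < n) (a : Fin n → R) : tmul tone a = a := by
  rw [tmul_eq_trunc_mul, ext_tone hn, Hurwitz.one_mul, trunc_ext]

lemma ext_apply_zero (hn : 0 < n) (a : Fin n → R) : ext a 0 = a ⟨0, hn⟩ := dif_pos hn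

lemma tmul_apply_zero (hn : 0 < n) (a b : Fin n → R) :
    tmul a b ⟨0, hn⟩ = a ⟨0, hn⟩ * b ⟨0, hn⟩ := by
  rw [tmul_eq_trunc_mul, trunc, Hurwitz.mul_apply_zero, ext_apply_zero hn, ext_apply_zero hn]

lemma tpow_succ (a : Fin n → R) (k : ℕ) : tpow a (k + 1) = tmul a (tpow a k) :=
  Function.iterate_succ_apply' _ _ _

lemma tpow_eq_trunc_pow (a : Fin n → R) (k : ℕ) : tpow a k = trunc n (Hurwitz.pow (ext a) k) := by
  induction k with
  | zero => rfl
  | succ k ih =>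
    rw [tpow_succ, ih, tmul_eq_trunc_mul, Hurwitz.pow_succ]
    exact trunc_mul_congr (fun _ _ => rfl) (fun i hi => ext_trunc_apply _ hi)

lemma tpow_apply_zero (hn : 0 < n) (a : Fin n → R) (k : ℕ) :
    tpow a k ⟨0, hn⟩ = a ⟨0, hn⟩ ^ k := by
  rw [tpow_eq_trunc_pow, trunc, Hurwitz.pow_apply_zero, ext_apply_zero hn]

lemma tpow_char_eq_tone (p : ℕ) [CharP R p] [NeZero p] (hn : 0 < n) {a : Fin n → R}
    (ha : a ⟨0, hn⟩ = 1) : tpow a p = tone := by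
  rw [tpow_eq_trunc_pow, Hurwitz.pow_char_eq_one p (by rw [ext_apply_zero hn, ha])]
  rfl

end Truncated

lemma Nat.card_subtype_apply_eq {ι R : Type*} [Fintype ι] [DecidableEq ι] [Finite R] (i : ι)
    (c : R) : Nat.card {a : ι → R // a i = c} = Nat.card R ^ (Fintype.card ι - 1) := by
  rw [Nat.card_congr ((Equiv.funSplitAt i R).subtypeEquiv (p := fun a => a i = c)
      (q := fun x => x.1 = c) fun _ => Iff.rfl),
    Nat.card_congr (Equiv.prodSubtypeFstEquivSubtypeProd (p := fun r => r = c))]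
  simp [Nat.card_fun]

/-- The group `U_{ℤ_p}^{(n)}` of the paper, written additively so that it becomes a
`ZMod p`-module. -/
abbrev HurwitzU (p n : ℕ) (hn : 0 < n) : Type := {a : Fin n → ZMod p // a ⟨0, hn⟩ = 1}

namespace HurwitzU

variable {p n : ℕ} [NeZero p] {hn : 0 < n}

instance : Zero (HurwitzU p n hn) := ⟨⟨tone, if_pos rfl⟩⟩

instance : Add (HurwitzU p n hn) :=
  ⟨fun a b => ⟨tmul a.1 b.1, by rw [tmul_apply_zero, a.2, b.2, one_mul]⟩⟩

instance : SMul ℕ (HurwitzU p n hn) :=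
  ⟨fun k a => ⟨tpow a.1 k, by rw [tpow_apply_zero, a.2, one_pow]⟩⟩

instance : Neg (HurwitzU p n hn) := ⟨fun a => (p - 1) • a⟩

lemma char_nsmul (a : HurwitzU p n hn) : p • a = 0 :=
  Subtype.ext (tpow_char_eq_tone p hn a.2)

instance : AddCommGroup (HurwitzU p n hn) where
  nsmul k a := k • a
  zsmul := zsmulRec (· • ·)
  add_assoc a b c := Subtype.ext (tmul_assoc a.1 b.1 c.1)
  zero_add a := Subtype.ext (tone_tmul hn a.1)
  add_zero a := Subtype.ext ((tmul_comm _ _).trans (tone_tmul hn a.1))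
  add_comm a b := Subtype.ext (tmul_comm a.1 b.1)
  nsmul_zero a := rfl
  nsmul_succ k a := Subtype.ext ((tpow_succ a.1 k).trans (tmul_comm _ _))
  zsmul_succ' k a := Subtype.ext ((tpow_succ a.1 k).trans (tmul_comm _ _))
  neg_add_cancel a := Subtype.ext <| by
    change tmul (tpow a.1 (p - 1)) a.1 = tone
    rw [tmul_comm, ← tpow_succ, Nat.sub_add_cancel NeZero.one_le]
    exact tpow_char_eq_tone p hn a.2

instance : Module (ZMod p) (HurwitzU p n hn) := AddCommGroup.zmodModule char_nsmul

lemma card : Nat.card (HurwitzU p n hn) = p ^ (n - 1) := by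
  rw [Nat.card_subtype_apply_eq, Nat.card_zmod, Fintype.card_fin]

lemma finrank [Fact p.Prime] : Module.finrank (ZMod p) (HurwitzU p n hn) = n - 1 := by
  have := Module.natCard_eq_pow_finrank (K := ZMod p) (V := HurwitzU p n hn)
  rw [card, Nat.card_zmod] at this
  exact Nat.pow_right_injective (Fact.out : p.Prime).two_le this.symm

end HurwitzU

/-- Every element of `U^{(n)}_{ℤ_p}` other than the identity has order `p`, and
`(U^{(n)}_{ℤ_p}, ⋆)` is isomorphic to `((ℤ/pℤ)^{n-1}, +)`; in particular it has
order `p^{n-1}`. -/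
theorem truncated_hurwitz_group_zmod_p (p n : ℕ) [Fact p.Prime] (hn : 0 < n) :
    (∀ a : Fin n → ZMod p, a ⟨0, hn⟩ = 1 → a ≠ tone →
      tpow a p = tone ∧ ∀ m : ℕ, 0 < m → m < p → tpow a m ≠ tone) ∧
    Nat.card {a : Fin n → ZMod p // a ⟨0, hn⟩ = 1} = p ^ (n - 1) ∧
    ∃ φ : {a : Fin n → ZMod p // a ⟨0, hn⟩ = 1} ≃ (Fin (n - 1) → ZMod p),
      ∀ a b c : {a : Fin n → ZMod p // a ⟨0, hn⟩ = 1},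
        c.1 = tmul a.1 b.1 → φ c = φ a + φ b := by
  refine ⟨fun a ha hne => ⟨tpow_char_eq_tone p hn ha, fun m hm hmp hpow => ?_⟩,
    HurwitzU.card, ?_⟩
  · let A : HurwitzU p n hn := ⟨a, ha⟩
    have horder : addOrderOf A = p :=
      addOrderOf_eq_prime (HurwitzU.char_nsmul A) fun h => hne (congrArg Subtype.val h)
    exact nsmul_ne_zero_of_lt_addOrderOf hm.ne' (by rwa [horder]) (Subtype.ext hpow : m • A = 0)
  · let φ : HurwitzU p n hn ≃ₗ[ZMod p] (Fin (n - 1) → ZMod p) :=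
      LinearEquiv.ofFinrankEq _ _ (by rw [HurwitzU.finrank, Module.finrank_fin_fun])
    refine ⟨φ.toEquiv, fun a b c hc => ?_⟩
    rw [show c = a + b from Subtype.ext hc]
    exact φ.map_add a b
end

section
/- Let q(x) = (q_n(x))_{n≥0} be a binomial type sequence over a commutative ℚ-algebra R, with q_n(x) = ∑_{i=1}^{n} c_{i,n} x^i for n ≥ 1. Let u ∈ H_R be the unique sequence with τ(x·u) = q(x), where τ is the isomorphism from (H_{R[x]}, +) to the group of sequences starting with 1 under the binomial convolution ⋆ built from the basis b^{(k)}. Then u_0 = c_{1,1} and for all m ≥ 2, u_{m-1} = c_{1,m} + ∑_{k | m, k ≠ 1, k ≠ m} ((-1)^{m/k} · m! / ((m/k) · (k!)^{m/k})) · u_{k-1}. -/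
/-- The binomial-type polynomial sequence `p^{(b⁽ᵏ⁾)}(y)` attached to the basis
sequence `b⁽ᵏ⁾` (which is `(1,1,1,...)` for `k = 1`, and has `1` in positions `0`
and `k` and `0` elsewhere for `k ≥ 2`), evaluated at `y`:
its e.g.f. is `(e.g.f. of b⁽ᵏ⁾)^y`. -/
noncomputable def Pseq {R : Type*} [CommRing R] [Algebra ℚ R] (k : ℕ) (y : Polynomial R) :
    ℕ → Polynomial R := fun n =>
  if k = 1 then y ^ n
  else if k ∣ n then
    Polynomial.C (algebraMap ℚ R
        (n.factorial / ((n / k).factorial * (k.factorial : ℚ) ^ (n / k)))) *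
      ∏ h ∈ Finset.range (n / k), (y - (h : Polynomial R))
  else 0

/-- The `⋆`-product `f(1) ⋆ f(2) ⋆ ⋯ ⋆ f(m)` of a family of sequences. -/
def hprod {R : Type*} [CommRing R] : ℕ → (ℕ → ℕ → R) → ℕ → R
  | 0, _ => hone
  | m + 1, f => hmul (f (m + 1)) (hprod m f)

open Polynomial

section HurwitzProduct

variable {R : Type*} [CommRing R]

lemma hmul_hone_left (b : ℕ → R) : hmul hone b = b := by
  funext n
  rw [hmul, Finset.sum_eq_single 0 (fun h _ h0 => by simp [hone, h0]) (by simp)]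
  simp [hone]

lemma hmul_hone_right (a : ℕ → R) : hmul a hone = a := by
  funext n
  rw [hmul, Finset.sum_eq_single n (fun h hh hn => ?_) (by simp)]
  · simp [hone]
  · have : n - h ≠ 0 := by have := Finset.mem_range.1 hh; omega
    simp [hone, this]

lemma hmul_coeff_zero (a b : ℕ → R[X]) (n : ℕ) :
    (hmul a b n).coeff 0 = hmul (fun i => (a i).coeff 0) (fun i => (b i).coeff 0) n := by
  simp [hmul, finsetSum_coeff, mul_coeff_zero]

lemma hmul_coeff_one (a b : ℕ → R[X]) (n : ℕ) :
    (hmul a b n).coeff 1 =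
      hmul (fun i => (a i).coeff 0) (fun i => (b i).coeff 1) n +
        hmul (fun i => (a i).coeff 1) (fun i => (b i).coeff 0) n := by
  simp only [hmul, finsetSum_coeff, ← Finset.sum_add_distrib]
  refine Finset.sum_congr rfl fun h _ => ?_
  rw [mul_assoc, ← C_eq_natCast, coeff_C_mul, mul_coeff_one]
  ring

variable (f : ℕ → ℕ → R[X]) (hf : ∀ k, (fun n => (f k n).coeff 0) = hone)
include hf

lemma hprod_coeff_zero (m : ℕ) : (fun n => (hprod m f n).coeff 0) = hone := by
  induction m with
  | zero => funext n; cases n <;> simp [hprod, hone]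
  | succ m ih =>
    funext n
    rw [hprod, hmul_coeff_zero, hf, ih, hmul_hone_left]

lemma hprod_coeff_one (m n : ℕ) :
    (hprod m f n).coeff 1 = ∑ k ∈ Finset.range m, (f (k + 1) n).coeff 1 := by
  induction m with
  | zero => cases n <;> simp [hprod, hone, coeff_one]
  | succ m ih =>
    rw [hprod, hmul_coeff_one, hf, hprod_coeff_zero f hf, hmul_hone_left, hmul_hone_right, ih,
      Finset.sum_range_succ, add_comm]

end HurwitzProduct

section LinearCoefficient

variable {R : Type*} [CommRing R] {y : R[X]}

lemma coeff_one_pow (hy : y.coeff 0 = 0) (n : ℕ) :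
    (y ^ n).coeff 1 = if n = 1 then y.coeff 1 else 0 := by
  induction n with
  | zero => simp [coeff_one]
  | succ n ih =>
    rw [pow_succ, mul_coeff_one, ih, hy, coeff_zero_eq_eval_zero, eval_pow,
      ← coeff_zero_eq_eval_zero, hy]
    rcases n with _ | n <;> simp

lemma coeff_one_prod_range_sub_natCast (hy : y.coeff 0 = 0) (s : ℕ) :
    (∏ h ∈ Finset.range (s + 1), (y - (h : R[X]))).coeff 1 =
      (-1) ^ s * s.factorial * y.coeff 1 := by
  have hconst (h : ℕ) : (y - ((h + 1 : ℕ) : R[X])).coeff 0 = -((h + 1 : ℕ) : R) := by simp [hy]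
  rw [Finset.prod_range_succ', mul_coeff_one, coeff_zero_prod]
  simp only [hconst, Finset.prod_neg, Finset.card_range, ← Nat.cast_prod,
    Finset.prod_range_add_one_eq_factorial]
  simp [hy]

end LinearCoefficient

section Pseq

variable {R : Type*} [CommRing R] [Algebra ℚ R] {y : R[X]}

lemma Pseq_zero (k : ℕ) : Pseq k y 0 = 1 := by
  unfold Pseq
  split_ifs with _ hk0
  · simp
  · simp
  · exact absurd (dvd_zero k) hk0

lemma Pseq_coeff_zero (hy : y.coeff 0 = 0) (k : ℕ) : (fun n => (Pseq k y n).coeff 0) = hone := by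
  funext n
  rcases n.eq_zero_or_pos with rfl | hn
  · simp [Pseq_zero, hone]
  rw [coeff_zero_eq_eval_zero] at hy ⊢
  rw [hone, if_neg hn.ne']
  unfold Pseq
  split_ifs with hk hkn
  · rw [eval_pow, hy, zero_pow hn.ne']
  · have hk0 : 0 < k := Nat.pos_of_dvd_of_pos hkn hn
    rw [eval_mul, eval_prod, Finset.prod_eq_zero (i := 0) ?_ (by simp [hy]), mul_zero]
    exact Finset.mem_range.2 (Nat.div_pos (Nat.le_of_dvd hn hkn) hk0)
  · simp

lemma Pseq_one_coeff_one (hy : y.coeff 0 = 0) (n : ℕ) :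
    (Pseq 1 y n).coeff 1 = if n = 1 then y.coeff 1 else 0 := by
  unfold Pseq
  rw [if_pos rfl, coeff_one_pow hy]

lemma Pseq_coeff_one_of_not_dvd {k n : ℕ} (hk : k ≠ 1) (hkn : ¬k ∣ n) :
    (Pseq k y n).coeff 1 = 0 := by
  unfold Pseq
  rw [if_neg hk, if_neg hkn, coeff_zero]

lemma Pseq_coeff_one_of_dvd (hy : y.coeff 0 = 0) {k n : ℕ} (hk : k ≠ 1) (hkn : k ∣ n)
    (hn : 0 < n) :
    (Pseq k y n).coeff 1 = -(algebraMap ℚ R ((-1 : ℚ) ^ (n / k) * n.factorial /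
      (((n / k : ℕ) : ℚ) * (k.factorial : ℚ) ^ (n / k))) * y.coeff 1) := by
  obtain ⟨s, hs⟩ : ∃ s, n / k = s + 1 :=
    Nat.exists_eq_add_one.2 (Nat.div_pos (Nat.le_of_dvd hn hkn) (Nat.pos_of_dvd_of_pos hkn hn))
  have hsign : (-1 : R) ^ s * s.factorial = algebraMap ℚ R ((-1) ^ s * s.factorial) := by simp
  unfold Pseq
  rw [if_neg hk, if_pos hkn, hs, coeff_C_mul, coeff_one_prod_range_sub_natCast hy, hsign,
    ← mul_assoc, ← map_mul, ← neg_mul, ← map_neg]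
  congr 2
  rw [Nat.factorial_succ]
  push_cast
  field_simp
  ring

end Pseq

section Tau

variable {R : Type*} [CommRing R] [Algebra ℚ R] {y : ℕ → R[X]} (hy : ∀ k, (y k).coeff 0 = 0)
include hy

lemma hprod_Pseq_coeff_one_eq_sum_divisors (m : ℕ) :
    (hprod m (fun k => Pseq k (y k)) m).coeff 1 = ∑ d ∈ m.divisors, (Pseq d (y d) m).coeff 1 := by
  have hnot_dvd : ∀ d ∈ Finset.Ico 1 (m + 1), (Pseq d (y d) m).coeff 1 ≠ 0 → d ∣ m := by
    intro d _ hd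
    by_contra hdm
    exact hd (Pseq_coeff_one_of_not_dvd (by rintro rfl; exact hdm (one_dvd m)) hdm)
  rw [hprod_coeff_one _ (fun k => Pseq_coeff_zero (hy k) k), Nat.divisors,
    Finset.sum_filter_of_ne hnot_dvd, Finset.sum_Ico_eq_sum_range, Nat.add_sub_cancel]
  simp only [add_comm 1]

lemma hprod_Pseq_coeff_one {m : ℕ} (hm : 2 ≤ m) :
    (hprod m (fun k => Pseq k (y k)) m).coeff 1 = (y m).coeff 1 -
      ∑ d ∈ (m.divisors.erase 1).erase m,
        algebraMap ℚ R ((-1 : ℚ) ^ (m / d) * m.factorial /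
          (((m / d : ℕ) : ℚ) * (d.factorial : ℚ) ^ (m / d))) * (y d).coeff 1 := by
  have hm0 : m ≠ 0 := by omega
  have hm1 : m ≠ 1 := by omega
  have hmem_m : m ∈ m.divisors := Nat.mem_divisors_self m hm0
  have hmem_1 : 1 ∈ m.divisors.erase m :=
    Finset.mem_erase.2 ⟨hm1.symm, Nat.one_mem_divisors.2 hm0⟩
  have hcoeff_m : (Pseq m (y m) m).coeff 1 = (y m).coeff 1 := by
    rw [Pseq_coeff_one_of_dvd (hy m) hm1 dvd_rfl (by omega), Nat.div_self (by omega)]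
    have : (m.factorial : ℚ) ≠ 0 := by positivity
    simp [this]
  have hcoeff_proper : ∀ d ∈ (m.divisors.erase 1).erase m, (Pseq d (y d) m).coeff 1 =
      -(algebraMap ℚ R ((-1 : ℚ) ^ (m / d) * m.factorial /
          (((m / d : ℕ) : ℚ) * (d.factorial : ℚ) ^ (m / d))) * (y d).coeff 1) := by
    intro d hd
    simp only [Finset.mem_erase, Nat.mem_divisors] at hd
    exact Pseq_coeff_one_of_dvd (hy d) hd.2.1 hd.2.2.1 (by omega)
  rw [hprod_Pseq_coeff_one_eq_sum_divisors hy m, ← Finset.add_sum_erase _ _ hmem_m,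
    ← Finset.add_sum_erase _ _ hmem_1, Pseq_one_coeff_one (hy 1), if_neg hm1, hcoeff_m,
    Finset.erase_right_comm, Finset.sum_congr rfl hcoeff_proper, Finset.sum_neg_distrib]
  ring

end Tau

open MvPolynomial in
theorem binomial_type_u_recursion_general {R : Type*} [CommRing R] [Algebra ℚ R]
    (q : ℕ → Polynomial R) (u : ℕ → R)
    (htau : ∀ m : ℕ,
      hprod m (fun k => Pseq k (Polynomial.C (u (k - 1)) * Polynomial.X)) m = q m) :
    u 0 = (q 1).coeff 1 ∧
    ∀ m : ℕ, 2 ≤ m →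
      u (m - 1) = (q m).coeff 1 +
        ∑ k ∈ (m.divisors.erase 1).erase m,
          algebraMap ℚ R ((-1 : ℚ) ^ (m / k) * m.factorial /
            (((m / k : ℕ) : ℚ) * (k.factorial : ℚ) ^ (m / k))) * u (k - 1) := by
  have hy (k : ℕ) : (Polynomial.C (u (k - 1)) * Polynomial.X).coeff 0 = 0 := by simp
  refine ⟨?_, fun m hm => ?_⟩
  · rw [← htau 1, hprod_Pseq_coeff_one_eq_sum_divisors hy, Nat.divisors_one,
      Finset.sum_singleton, Pseq_one_coeff_one (hy 1), if_pos rfl, Polynomial.coeff_C_mul,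
      coeff_X_one, mul_one]
  · rw [← htau m, hprod_Pseq_coeff_one hy hm]
    simp only [Polynomial.coeff_C_mul, coeff_X_one, mul_one]
    ring

open MvPolynomial in
/-- If `q` is a binomial type sequence with `q_n(x) = ∑_{i=1}^n c_{i,n} xⁱ` and `u` is
the sequence with `τ(x·u) = q(x)`, then `u₀ = c_{1,1}` and for `m ≥ 2`,
`u_{m-1} = c_{1,m} + ∑_{k ∣ m, k ≠ 1, m} ((-1)^{m/k} m! / ((m/k)(k!)^{m/k})) u_{k-1}`. -/
theorem binomial_type_u_recursion {R : Type*} [CommRing R] [Algebra ℚ R]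
    (q : ℕ → Polynomial R) (u : ℕ → R) (hq0 : q 0 = 1)
    (hq : ∀ n : ℕ,
      Polynomial.aeval (X 0 + X 1 : MvPolynomial (Fin 2) R) (q n) =
        ∑ h ∈ Finset.range (n + 1), (n.choose h : MvPolynomial (Fin 2) R) *
          Polynomial.aeval (X 0 : MvPolynomial (Fin 2) R) (q h) *
          Polynomial.aeval (X 1 : MvPolynomial (Fin 2) R) (q (n - h)))
    (htau : ∀ m : ℕ,
      hprod m (fun k => Pseq k (Polynomial.C (u (k - 1)) * Polynomial.X)) m = q m) :
    u 0 = (q 1).coeff 1 ∧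
    ∀ m : ℕ, 2 ≤ m →
      u (m - 1) = (q m).coeff 1 +
        ∑ k ∈ (m.divisors.erase 1).erase m,
          algebraMap ℚ R ((-1 : ℚ) ^ (m / k) * m.factorial /
            (((m / k : ℕ) : ℚ) * (k.factorial : ℚ) ^ (m / k))) * u (k - 1) :=
  binomial_type_u_recursion_general q u htau
end
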